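/- Let M be a matroid of rank r on E = {1,…,n} and let E = E_1 ∪ E_2 be a good 2-partition of M with associated integers a_1, a_2. Let M_1 and M_2 be the matroids on E whose bases are B(M_1) = {B a base of M : |B ∩ E_1| ≤ a_1} and B(M_2) = {B a base of M : |B ∩ E_2| ≤ a_2}. Then P(M) = P(M_1) ∪ P(M_2) is a hyperplane split of P(M): P(M_1) and P(M_2) are proper subsets of P(M) whose union is P(M), and P(M_1) ∩ P(M_2) is a face of both P(M_1) and P(M_2) and is itself a matroid base polytope. -/

import Mathlib

open Matroid Set

/-- The rank of a matroid: the supremum of the cardinalities of its independent sets. -/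
noncomputable def mrk {α : Type*} (M : Matroid α) : ℕ :=
  sSup {n : ℕ | ∃ I, M.Indep I ∧ I.ncard = n}

/-- The 0/1 incidence vector of a set. -/
noncomputable def incVec {α : Type*} (B : Set α) : α → ℝ := B.indicator 1

/-- The matroid base polytope: the convex hull of the incidence vectors of the bases. -/
noncomputable def basePolytope {α : Type*} (M : Matroid α) : Set (α → ℝ) :=
  convexHull ℝ {x | ∃ B, M.IsBase B ∧ x = incVec B}

/-- A good 2-partition of a rank-`r` matroid `M`: the ground set is partitioned as
`E₁ ∪ E₂` with `r(M|Eᵢ) > 1`, integers `0 < aᵢ < r(M|Eᵢ)`, `(P1)` `r = a₁ + a₂`, and `(P2)`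
unions of small independent sets of the two restrictions are independent in `M`. -/
def IsGoodPartition2 {α : Type*} (M : Matroid α) (r : ℕ) (E₁ E₂ : Set α) (a₁ a₂ : ℕ) : Prop :=
  E₁ ∪ E₂ = M.E ∧ Disjoint E₁ E₂ ∧
  1 < mrk (M ↾ E₁) ∧ 1 < mrk (M ↾ E₂) ∧
  0 < a₁ ∧ a₁ < mrk (M ↾ E₁) ∧ 0 < a₂ ∧ a₂ < mrk (M ↾ E₂) ∧
  r = a₁ + a₂ ∧
  ∀ X Y : Set α, (M ↾ E₁).Indep X → X.ncard ≤ a₁ →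
    (M ↾ E₂).Indep Y → Y.ncard ≤ a₂ → M.Indep (X ∪ Y)

/-!
On `P(M)` the two functionals `x(E₁) = ∑_{i ∈ E₁} xᵢ` and `x(E₂)` add up to `r = a₁ + a₂`, so the
hyperplane `x(E₁) = a₁` cuts `P(M)` into `P(M) ∩ {x(E₁) ≤ a₁}` and `P(M) ∩ {x(E₂) ≤ a₂}`, and these
are `P(M₁)` and `P(M₂)` because cutting a base polytope by `x(S) ≤ a` creates no new vertices.
To see this, separate with a functional `φ`: by the intermediate value theorem there is a
multiplier `t ≥ 0` such that the bases maximising `φ - t • x(S)` include one with `|B ∩ S| ≤ a`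
and, if `t > 0`, one with `|B ∩ S| ≥ a`. Symmetric exchange keeps the maximising bases
maximising and moves `|B ∩ S|` by at most one, so some maximiser has `|B ∩ S| = a` exactly,
and it bounds `φ` on `P(M) ∩ {x(S) ≤ a}`.

The common face `{x(E₁) = a₁}` is `P(M₁) ∩ {x(E₂) ≤ a₂}`, the base polytope of the matroid whose
bases are the bases `B` of `M` with `|B ∩ E₁| = a₁`. By (P2) these are exactly the bases of the
direct sum of the truncations of `M|E₁` to rank `a₁` and of `M|E₂` to rank `a₂`.
-/

theorem exists_nonneg_le_and_eq_zero_or_ge {F G : ℝ → ℝ} (hF : Continuous F) (hG : Continuous G)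
    {R : ℝ} (hR : 0 ≤ R) (hFR : F R ≤ G R) : ∃ t, 0 ≤ t ∧ F t ≤ G t ∧ (t = 0 ∨ G t ≤ F t) := by
  by_cases h0 : F 0 ≤ G 0
  · exact ⟨0, le_rfl, h0, Or.inl rfl⟩
  obtain ⟨t, ⟨ht0, -⟩, ht⟩ := intermediate_value_Icc' hR (hF.sub hG).continuousOn
    (show (0 : ℝ) ∈ Icc (F R - G R) (F 0 - G 0) from ⟨by linarith, by linarith [not_le.1 h0]⟩)
  have ht : F t = G t := sub_eq_zero.1 ht
  exact ⟨t, ht0, ht.le, Or.inr ht.ge⟩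

theorem exists_lagrange_multiplier {ι : Type*} {s : Set ι} (hs : s.Finite) (w : ι → ℝ)
    (k : ι → ℕ) {a : ℕ} {i₀ : ι} (hi₀ : i₀ ∈ s) (hk₀ : k i₀ = a) :
    ∃ t : ℝ, 0 ≤ t ∧ ∃ i ∈ s, ∃ j ∈ s, (∀ l ∈ s, w l - t * k l ≤ w i - t * k i) ∧
      (∀ l ∈ s, w l - t * k l ≤ w j - t * k j) ∧ k i ≤ a ∧ (t = 0 ∨ a ≤ k j) := by
  classical
  set f : ℝ → ι → ℝ := fun t l ↦ w l - t * k l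
  set lo := hs.toFinset.filter (k · ≤ a)
  set hi := hs.toFinset.filter (a ≤ k ·)
  have hi₀lo : i₀ ∈ lo := by simp [lo, hi₀, hk₀]
  have hhi : hi.Nonempty := ⟨i₀, by simp [hi, hi₀, hk₀]⟩
  set G : ℝ → ℝ := fun t ↦ lo.sup' ⟨i₀, hi₀lo⟩ (f t)
  set F : ℝ → ℝ := fun t ↦ hi.sup' hhi (f t)
  have hmem : ∀ l ∈ s, ∀ t, f t l ≤ max (F t) (G t) := fun l hl t ↦ by
    rcases le_total (k l) a with h | h
    · exact le_max_of_le_right (Finset.le_sup' (f t) (by simp [lo, hl, h]))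
    · exact le_max_of_le_left (Finset.le_sup' (f t) (by simp [hi, hl, h]))
  have hG : ∀ t, F t ≤ G t → ∃ i ∈ s, (∀ l ∈ s, f t l ≤ f t i) ∧ k i ≤ a := fun t ht ↦ by
    obtain ⟨i, hi, hGi⟩ := lo.exists_mem_eq_sup' ⟨i₀, hi₀lo⟩ (f t)
    simp only [lo, Finset.mem_filter, Set.Finite.mem_toFinset] at hi
    exact ⟨i, hi.1, fun l hl ↦ (hmem l hl t).trans (max_le ht le_rfl |>.trans hGi.le), hi.2⟩
  have hF : ∀ t, G t ≤ F t → ∃ j ∈ s, (∀ l ∈ s, f t l ≤ f t j) ∧ a ≤ k j := fun t ht ↦ by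
    obtain ⟨j, hj, hFj⟩ := hi.exists_mem_eq_sup' hhi (f t)
    simp only [hi, Finset.mem_filter, Set.Finite.mem_toFinset] at hj
    exact ⟨j, hj.1, fun l hl ↦ (hmem l hl t).trans (max_le le_rfl ht |>.trans hFj.le), hj.2⟩
  -- beyond `R` the constraint `k ≤ a` wins
  set R := ∑ l ∈ hs.toFinset, |w l - w i₀|
  have hR : 0 ≤ R := Finset.sum_nonneg fun _ _ ↦ abs_nonneg _
  have hFR : F R ≤ G R := by
    refine Finset.sup'_le _ _ fun l hl ↦ ?_
    simp only [hi, Finset.mem_filter, Set.Finite.mem_toFinset] at hl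
    rcases hl.2.eq_or_lt with h | h
    · exact Finset.le_sup' (f R) (by simp [lo, hl.1, ← h])
    refine le_trans ?_ (Finset.le_sup' (f R) hi₀lo)
    have hwl : w l - w i₀ ≤ R := (le_abs_self _).trans
      (Finset.single_le_sum (f := fun l ↦ |w l - w i₀|) (fun _ _ ↦ abs_nonneg _)
        (hs.mem_toFinset.2 hl.1))
    have hkl : (a : ℝ) + 1 ≤ k l := by exact_mod_cast h
    simp only [f, hk₀]
    nlinarith
  obtain ⟨t, ht0, hFG, hGF⟩ := exists_nonneg_le_and_eq_zero_or_ge (F := F) (G := G)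
    (Continuous.finset_sup'_apply _ fun _ _ ↦ by fun_prop)
    (Continuous.finset_sup'_apply _ fun _ _ ↦ by fun_prop) hR hFR
  obtain ⟨i, hi, himax, hia⟩ := hG t hFG
  refine ⟨t, ht0, i, hi, ?_⟩
  rcases hGF with rfl | hGF
  · exact ⟨i, hi, himax, himax, hia, Or.inl rfl⟩
  obtain ⟨j, hj, hjmax, hja⟩ := hF t hGF
  exact ⟨j, hj, himax, hjmax, hia, Or.inr hja⟩

theorem isExposed_sep_eq_of_forall_le {E : Type*} [AddCommGroup E] [Module ℝ E]
    [TopologicalSpace E] {A : Set E} {l : E →L[ℝ] ℝ} {c : ℝ} (h : ∀ x ∈ A, l x ≤ c) :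
    IsExposed ℝ A {x ∈ A | l x = c} := by
  rintro ⟨x₀, hx₀A, hx₀⟩
  refine ⟨l, Set.ext fun x ↦ ⟨fun ⟨hxA, hx⟩ ↦ ⟨hxA, fun y hy ↦ hx ▸ h y hy⟩, ?_⟩⟩
  exact fun ⟨hxA, hmax⟩ ↦ ⟨hxA, le_antisymm (h x hxA) (hx₀ ▸ hmax x₀ hx₀A)⟩

theorem inter_setOf_le_inter_eq_sep {E : Type*} {P : Set E} {f g : E → ℝ} {a b : ℝ}
    (h : ∀ x ∈ P, f x + g x = a + b) :
    P ∩ {x | f x ≤ a} ∩ (P ∩ {x | g x ≤ b}) = {x ∈ P ∩ {x | f x ≤ a} | f x = a} := by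
  ext x
  simp only [mem_inter_iff, mem_ofPred_eq]
  constructor
  · rintro ⟨⟨hx, hf⟩, -, hg⟩
    exact ⟨⟨hx, hf⟩, by linarith [h x hx]⟩
  · rintro ⟨⟨hx, hf⟩, hfa⟩
    exact ⟨⟨hx, hf⟩, hx, by linarith [h x hx]⟩

namespace Matroid

variable {α : Type*} {M : Matroid α} {B B₁ B₂ I : Set α} {e : α}

theorem IsBase.exists_symm_exchange (hB₁ : M.IsBase B₁) (hB₂ : M.IsBase B₂) (he : e ∈ B₁ \ B₂) :
    ∃ f ∈ B₂ \ B₁, M.IsBase (insert f (B₁ \ {e})) ∧ M.IsBase (insert e B₂ \ {f}) := by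
  have heE : e ∈ M.E := hB₁.subset_ground he.1
  have heB₂ : e ∈ M.closure B₂ := by rwa [hB₂.closure_eq]
  have hK := hB₂.fundCircuit_isCircuit heE he.2
  -- `e` is spanned by its fundamental circuit in `B₂` but not by `B₁ \ {e}`.
  obtain ⟨f, ⟨hfK, hfe⟩, hfcl⟩ := not_subset.1 fun hsub ↦
    hB₁.indep.notMem_closure_sdiff_of_mem he.1 <| M.closure_subset_closure_of_subset_closure hsub
      (hK.mem_closure_sdiff_singleton_of_mem (M.mem_fundCircuit e B₂))
  have hfB₂ : f ∈ B₂ := (M.fundCircuit_subset_insert e B₂ hfK).resolve_left hfe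
  have hfB₁ : f ∉ B₁ := fun hfB₁ ↦ hfcl (M.subset_closure _ (sdiff_subset.trans hB₁.subset_ground)
    ⟨hfB₁, hfe⟩)
  exact ⟨f, ⟨hfB₂, hfB₁⟩, hB₁.exchange_base_of_notMem_closure he.1 hfcl (hB₂.subset_ground hfB₂),
    hB₂.exchange_isBase_of_indep' hfB₂ he.2 ((hB₂.indep.mem_fundCircuit_iff heB₂ he.2).1 hfK)⟩

theorem IsBase.ncard_eq_mrk [Finite α] (hB : M.IsBase B) : B.ncard = mrk M := by
  have : IsGreatest {n | ∃ I, M.Indep I ∧ I.ncard = n} B.ncard := by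
    refine ⟨⟨B, hB.indep, rfl⟩, ?_⟩
    rintro _ ⟨I, hI, rfl⟩
    obtain ⟨B', hB', hIB'⟩ := hI.exists_isBase_superset
    exact (ncard_le_ncard hIB').trans (hB'.ncard_eq_ncard_of_isBase hB).le
  exact this.csSup_eq.symm

theorem Indep.isBase_of_mrk_le_ncard [Finite α] (hI : M.Indep I) (h : mrk M ≤ I.ncard) :
    M.IsBase I := by
  obtain ⟨B, hB, hIB⟩ := hI.exists_isBase_superset
  rwa [eq_of_subset_of_ncard_le hIB (hB.ncard_eq_mrk ▸ h)]

theorem exists_indep_ncard_eq_of_le_mrk [Finite α] {k : ℕ} (h : k ≤ mrk M) :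
    ∃ I, M.Indep I ∧ I.ncard = k := by
  obtain ⟨B, hB⟩ := M.exists_isBase
  obtain ⟨I, hIB, hI⟩ := exists_subset_card_eq (hB.ncard_eq_mrk ▸ h)
  exact ⟨I, hB.indep.subset hIB, hI⟩

def truncation (M : Matroid α) (k : ℕ) : Matroid α :=
  (IndepMatroid.ofBddAugment M.E (fun I ↦ M.Indep I ∧ I.encard ≤ k)
    ⟨M.empty_indep, by simp⟩
    (fun _ _ hJ hIJ ↦ ⟨hJ.1.subset hIJ, (encard_le_encard hIJ).trans hJ.2⟩)
    (fun I J hI hJ hIJ ↦ by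
      obtain ⟨e, he, hi⟩ := hI.1.augment hJ.1 hIJ
      refine ⟨e, he.1, he.2, hi, ?_⟩
      rw [encard_insert_of_notMem he.2]
      exact (Order.add_one_le_of_lt hIJ).trans hJ.2)
    ⟨k, fun _ hI ↦ hI.2⟩
    (fun _ hI ↦ hI.1.subset_ground)).matroid

@[simp] theorem truncation_ground_eq (M : Matroid α) (k : ℕ) : (M.truncation k).E = M.E := rfl

@[simp] theorem truncation_indep_iff {k : ℕ} :
    (M.truncation k).Indep I ↔ M.Indep I ∧ I.encard ≤ k := Iff.rfl

theorem truncation_isBase_iff {k : ℕ} (hk : ∃ I, M.Indep I ∧ I.encard = k) :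
    (M.truncation k).IsBase B ↔ M.Indep B ∧ B.encard = k := by
  obtain ⟨I, hI, hIk⟩ := hk
  obtain ⟨B', hB', hIB'⟩ := (truncation_indep_iff.2 ⟨hI, hIk.le⟩).exists_isBase_superset
  have hB'k : B'.encard = k := le_antisymm (truncation_indep_iff.1 hB'.indep).2
    (hIk ▸ encard_le_encard hIB')
  refine ⟨fun hB ↦ ⟨(truncation_indep_iff.1 hB.indep).1, hB.encard_eq_encard_of_isBase hB' ▸ hB'k⟩,
    fun ⟨hBi, hBk⟩ ↦ ?_⟩
  obtain ⟨B'', hB'', hBB''⟩ := (truncation_indep_iff.2 ⟨hBi, hBk.le⟩).exists_isBase_superset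
  have hfin : B.Finite := finite_of_encard_eq_coe hBk
  rwa [hfin.eq_of_subset_of_encard_le hBB'' (hBk ▸ (truncation_indep_iff.1 hB''.indep).2)]

end Matroid

section BasePolytope

variable {α : Type*}

theorem incVec_insert_sdiff_add {B₁ B₂ : Set α} {e f : α} (he : e ∈ B₁ \ B₂) (hf : f ∈ B₂ \ B₁) :
    incVec (insert f (B₁ \ {e})) + incVec (insert e B₂ \ {f}) = incVec B₁ + incVec B₂ := by
  classical
  have hef : e ≠ f := fun h ↦ hf.2 (h ▸ he.1)
  ext i
  by_cases hie : i = e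
  · subst hie; simp [incVec, hef, he.1, he.2]
  by_cases hif : i = f
  · subst hif; simp [incVec, hf.1, hf.2]
  simp [incVec, indicator_apply, hie, hif]

theorem Matroid.IsBase.exists_ncard_inter_eq_of_forall_le [Finite α] {M : Matroid α}
    (L : (α → ℝ) →L[ℝ] ℝ) (S : Set α) {A C : Set α} (hA : M.IsBase A) (hC : M.IsBase C)
    (hAmax : ∀ B, M.IsBase B → L (incVec B) ≤ L (incVec A)) (hCA : L (incVec C) = L (incVec A))
    {j : ℕ} (hCj : (C ∩ S).ncard ≤ j) (hjA : j ≤ (A ∩ S).ncard) :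
    ∃ D, M.IsBase D ∧ L (incVec D) = L (incVec A) ∧ (D ∩ S).ncard = j := by
  induction hk : (A \ C).ncard using Nat.strong_induction_on generalizing C with
  | _ k ih =>
  obtain hCj | hCj := hCj.eq_or_lt
  · exact ⟨C, hC, hCA, hCj⟩
  obtain ⟨e, heC, heA⟩ : ∃ e ∈ C, e ∉ A := not_subset.1 fun hCA' ↦
    hCj.not_ge (hC.eq_of_subset_isBase hA hCA' ▸ hjA)
  obtain ⟨f, hf, hC', hA'⟩ := hC.exists_symm_exchange hA ⟨heC, heA⟩
  -- the two exchanged bases have the same total value as `C` and `A`, so both stay maximal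
  have hsum := congrArg L (incVec_insert_sdiff_add ⟨heC, heA⟩ hf)
  rw [map_add, map_add] at hsum
  have hLC' : L (incVec (insert f (C \ {e}))) = L (incVec A) := by
    linarith [hAmax _ hC', hAmax _ hA']
  have hlt : (A \ insert f (C \ {e})).ncard < k := by
    refine hk ▸ ncard_lt_ncard ?_
    refine ssubset_of_subset_not_subset (fun x hx ↦ ⟨hx.1, fun hxC ↦ hx.2 ?_⟩)
      fun h ↦ (h hf).2 (mem_insert f _)
    exact mem_insert_of_mem _ ⟨hxC, fun hxe ↦ heA (hxe ▸ hx.1)⟩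
  have hC'j : (insert f (C \ {e}) ∩ S).ncard ≤ j := by
    refine (ncard_le_ncard (s := insert f (C \ {e}) ∩ S) (t := insert f (C ∩ S)) ?_).trans
      ((ncard_insert_le _ _).trans hCj)
    rintro x ⟨rfl | ⟨hxC, -⟩, hxS⟩
    exacts [mem_insert _ _, mem_insert_of_mem _ ⟨hxC, hxS⟩]
  exact ih _ hlt hC' hLC' hC'j rfl

theorem ncard_inter_add_ncard_inter_of_subset_union [Finite α] {B E₁ E₂ : Set α}
    (hdisj : Disjoint E₁ E₂) (hB : B ⊆ E₁ ∪ E₂) : (B ∩ E₁).ncard + (B ∩ E₂).ncard = B.ncard := by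
  rw [← ncard_union_eq (hdisj.mono inter_subset_right inter_subset_right),
    ← inter_union_distrib_left, inter_eq_left.2 hB]

theorem finite_setOf_incVec_isBase [Finite α] (M : Matroid α) :
    {x | ∃ B, M.IsBase B ∧ x = incVec B}.Finite :=
  (finite_range incVec).subset fun _ ⟨B, _, hx⟩ ↦ ⟨B, hx.symm⟩

theorem le_of_mem_basePolytope {M : Matroid α} {l : (α → ℝ) →L[ℝ] ℝ} {c : ℝ}
    (h : ∀ B, M.IsBase B → l (incVec B) ≤ c) {x : α → ℝ} (hx : x ∈ basePolytope M) : l x ≤ c :=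
  convexHull_min (by rintro _ ⟨B, hB, rfl⟩; exact h B hB)
    (convex_halfSpace_le (l : (α → ℝ) →ₗ[ℝ] ℝ).isLinear c) hx

theorem eq_of_mem_basePolytope {M : Matroid α} {l : (α → ℝ) →L[ℝ] ℝ} {c : ℝ}
    (h : ∀ B, M.IsBase B → l (incVec B) = c) {x : α → ℝ} (hx : x ∈ basePolytope M) : l x = c :=
  convexHull_min (by rintro _ ⟨B, hB, rfl⟩; exact h B hB)
    (convex_hyperplane (l : (α → ℝ) →ₗ[ℝ] ℝ).isLinear c) hx

variable [Fintype α]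

theorem sum_incVec (s : Set α) : ∑ i, incVec s i = s.ncard := by
  classical
  simp only [incVec, indicator_apply, Pi.one_apply, Finset.sum_boole, ncard_eq_toFinset_card']
  congr
  ext
  simp

noncomputable def coordSum (S : Set α) : (α → ℝ) →L[ℝ] ℝ :=
  ∑ i, incVec S i • ContinuousLinearMap.proj i

theorem coordSum_apply (S : Set α) (x : α → ℝ) : coordSum S x = ∑ i, incVec S i * x i := by
  simp [coordSum]

theorem coordSum_incVec (S B : Set α) : coordSum S (incVec B) = (B ∩ S).ncard := by
  rw [coordSum_apply, ← sum_incVec]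
  simp only [incVec, inter_indicator_one, Pi.mul_apply, mul_comm]

theorem Matroid.exists_isBase_forall_le_of_coordSum_le (M : Matroid α)
    (φ : (α → ℝ) →L[ℝ] ℝ) (S : Set α) {a : ℕ} (hex : ∃ B, M.IsBase B ∧ (B ∩ S).ncard = a) :
    ∃ D, M.IsBase D ∧ (D ∩ S).ncard ≤ a ∧
      ∀ x ∈ basePolytope M, coordSum S x ≤ a → φ x ≤ φ (incVec D) := by
  obtain ⟨B₀, hB₀, hB₀a⟩ := hex
  obtain ⟨t, ht, C, hC, A, hA, hCmax, hAmax, hCa, hAa⟩ :=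
    exists_lagrange_multiplier (toFinite {B | M.IsBase B}) (fun B ↦ φ (incVec B))
      (fun B ↦ (B ∩ S).ncard) (show B₀ ∈ {B | M.IsBase B} from hB₀) hB₀a
  set L := φ - t • coordSum S
  have hLx : ∀ x, L x = φ x - t * coordSum S x := fun _ ↦ rfl
  have hL : ∀ B, L (incVec B) = φ (incVec B) - t * (B ∩ S).ncard := fun B ↦ by
    rw [hLx, coordSum_incVec]
  obtain ⟨D, hD, hDmax, hDa, hDt⟩ : ∃ D, M.IsBase D ∧
      (∀ B, M.IsBase B → L (incVec B) ≤ L (incVec D)) ∧ (D ∩ S).ncard ≤ a ∧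
      t * (a - (D ∩ S).ncard) = 0 := by
    rcases hAa with rfl | hAa
    · exact ⟨C, hC, fun B hB ↦ by simpa [hL] using hCmax B hB, hCa, zero_mul _⟩
    obtain ⟨D, hD, hLD, hDa⟩ := hA.exists_ncard_inter_eq_of_forall_le L S hC
      (fun B hB ↦ by simpa [hL] using hAmax B hB)
      (by rw [hL, hL]; exact le_antisymm (hAmax C hC) (hCmax A hA)) hCa hAa
    exact ⟨D, hD, fun B hB ↦ hLD ▸ by simpa [hL] using hAmax B hB, hDa.le, by simp [hDa]⟩
  refine ⟨D, hD, hDa, fun x hx hxa ↦ ?_⟩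
  have hLD := le_of_mem_basePolytope hDmax hx
  rw [hL, hLx] at hLD
  nlinarith [mul_le_mul_of_nonneg_left hxa ht]

theorem basePolytope_eq_inter_of_isBase_iff {M M' : Matroid α} {S : Set α} {a : ℕ}
    (hM' : ∀ B, M'.IsBase B ↔ M.IsBase B ∧ (B ∩ S).ncard ≤ a)
    (hex : ∃ B, M.IsBase B ∧ (B ∩ S).ncard = a) :
    basePolytope M' = basePolytope M ∩ {x | coordSum S x ≤ a} := by
  refine subset_antisymm (subset_inter ?_ fun x hx ↦ ?_) fun x ⟨hx, hxa⟩ ↦ ?_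
  · exact convexHull_mono fun _ ⟨B, hB, hx⟩ ↦ ⟨B, ((hM' B).1 hB).1, hx⟩
  · refine le_of_mem_basePolytope (fun B hB ↦ ?_) hx
    simpa [coordSum_incVec] using ((hM' B).1 hB).2
  rw [basePolytope, ← iInter_halfSpaces_eq (convex_convexHull ℝ _)
    ((finite_setOf_incVec_isBase M').isCompact_convexHull (𝕜 := ℝ)).isClosed]
  refine mem_iInter.2 fun φ ↦ ?_
  obtain ⟨D, hD, hDa, hφD⟩ := M.exists_isBase_forall_le_of_coordSum_le φ S hex
  exact ⟨incVec D, subset_convexHull ℝ _ ⟨D, (hM' D).2 ⟨hD, hDa⟩, rfl⟩, hφD x hx hxa⟩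

theorem basePolytope_inter_setOf_coordSum_le_ssubset {M : Matroid α} {S : Set α} {a : ℕ}
    (h : a < mrk (M ↾ S)) : basePolytope M ∩ {x | coordSum S x ≤ a} ⊂ basePolytope M := by
  obtain ⟨X, ⟨hX, hXS⟩, hXa⟩ := exists_indep_ncard_eq_of_le_mrk (Nat.succ_le_of_lt h)
  obtain ⟨A, hA, hXA⟩ := hX.exists_isBase_superset
  refine inter_subset_left.ssubset_of_not_subset fun hsub ↦ ?_
  have hAS := (hsub (subset_convexHull ℝ _ ⟨A, hA, rfl⟩)).2
  rw [mem_ofPred_eq, coordSum_incVec, Nat.cast_le] at hAS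
  have := ncard_le_ncard (subset_inter hXA hXS)
  omega

end BasePolytope

namespace IsGoodPartition2

variable {α : Type*} {M : Matroid α} {E₁ E₂ : Set α} {a₁ a₂ : ℕ}

theorem ncard_inter_add_ncard_inter [Finite α] (h : IsGoodPartition2 M (mrk M) E₁ E₂ a₁ a₂)
    {B : Set α} (hB : M.IsBase B) : (B ∩ E₁).ncard + (B ∩ E₂).ncard = a₁ + a₂ := by
  have ⟨hE, hdisj, _, _, _, _, _, _, hr, _⟩ := h
  rw [ncard_inter_add_ncard_inter_of_subset_union hdisj (hE ▸ hB.subset_ground),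
    hB.ncard_eq_mrk, hr]

theorem coordSum_add_coordSum [Fintype α] (h : IsGoodPartition2 M (mrk M) E₁ E₂ a₁ a₂)
    {x : α → ℝ} (hx : x ∈ basePolytope M) : coordSum E₁ x + coordSum E₂ x = a₁ + a₂ := by
  refine eq_of_mem_basePolytope (l := coordSum E₁ + coordSum E₂) (fun B hB ↦ ?_) hx
  rw [_root_.add_apply, coordSum_incVec, coordSum_incVec]
  exact_mod_cast h.ncard_inter_add_ncard_inter hB

def middle (h : IsGoodPartition2 M (mrk M) E₁ E₂ a₁ a₂) : Matroid α :=
  ((M ↾ E₁).truncation a₁).disjointSum ((M ↾ E₂).truncation a₂) (by simpa using h.2.1)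

theorem isBase_middle_iff [Finite α] (h : IsGoodPartition2 M (mrk M) E₁ E₂ a₁ a₂) {B : Set α} :
    h.middle.IsBase B ↔ M.IsBase B ∧ (B ∩ E₁).ncard = a₁ := by
  have ⟨hE, hdisj, _, _, _, ha₁, _, ha₂, hr, hP2⟩ := h
  have htrunc : ∀ {S : Set α} {a : ℕ}, a < mrk (M ↾ S) → ∀ X,
      ((M ↾ S).truncation a).IsBase X ↔ (M.Indep X ∧ X ⊆ S) ∧ X.ncard = a := by
    intro S a ha X
    obtain ⟨I, hI, hIa⟩ := exists_indep_ncard_eq_of_le_mrk ha.le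
    rw [truncation_isBase_iff ⟨I, hI, by rw [← hIa, (toFinite I).cast_ncard_eq]⟩,
      ← (toFinite X).cast_ncard_eq, Nat.cast_inj, restrict_indep_iff]
  simp only [middle, disjointSum_isBase_iff, truncation_ground_eq, restrict_ground_eq,
    htrunc ha₁, htrunc ha₂, inter_subset_right, and_true]
  constructor
  · rintro ⟨⟨hI₁, hc₁⟩, ⟨hI₂, hc₂⟩, hBE⟩
    have hB : B = B ∩ E₁ ∪ B ∩ E₂ := by rw [← inter_union_distrib_left, inter_eq_left.2 hBE]
    refine ⟨Indep.isBase_of_mrk_le_ncard ?_ ?_, hc₁⟩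
    · rw [hB]
      exact hP2 _ _ ⟨hI₁, inter_subset_right⟩ hc₁.le ⟨hI₂, inter_subset_right⟩ hc₂.le
    · rw [← ncard_inter_add_ncard_inter_of_subset_union hdisj hBE, hc₁, hc₂, hr]
  · rintro ⟨hB, hc₁⟩
    have hc := h.ncard_inter_add_ncard_inter hB
    exact ⟨⟨hB.indep.subset inter_subset_left, hc₁⟩,
      ⟨hB.indep.subset inter_subset_left, by omega⟩, hE ▸ hB.subset_ground⟩

theorem exists_isBase_ncard_inter_eq [Finite α] (h : IsGoodPartition2 M (mrk M) E₁ E₂ a₁ a₂) :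
    ∃ B, M.IsBase B ∧ (B ∩ E₁).ncard = a₁ ∧ (B ∩ E₂).ncard = a₂ := by
  obtain ⟨B, hB⟩ := h.middle.exists_isBase
  have ⟨hBM, hB₁⟩ := h.isBase_middle_iff.1 hB
  have := h.ncard_inter_add_ncard_inter hBM
  exact ⟨B, hBM, hB₁, by omega⟩

theorem isBase_middle_iff_of_isBase_iff [Finite α] (h : IsGoodPartition2 M (mrk M) E₁ E₂ a₁ a₂)
    {M₁ : Matroid α} (hM₁ : ∀ B, M₁.IsBase B ↔ M.IsBase B ∧ (B ∩ E₁).ncard ≤ a₁) {B : Set α} :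
    h.middle.IsBase B ↔ M₁.IsBase B ∧ (B ∩ E₂).ncard ≤ a₂ := by
  rw [h.isBase_middle_iff, hM₁]
  refine ⟨fun ⟨hB, h₁⟩ ↦ ⟨⟨hB, h₁.le⟩, ?_⟩, fun ⟨⟨hB, h₁⟩, h₂⟩ ↦ ⟨hB, ?_⟩⟩ <;>
  · have := h.ncard_inter_add_ncard_inter hB
    omega

end IsGoodPartition2

theorem statement1_general {n : ℕ} (M : Matroid (Fin n)) (r : ℕ)
    (hrank : mrk M = r) (E₁ E₂ : Set (Fin n)) (a₁ a₂ : ℕ)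
    (hgood : IsGoodPartition2 M r E₁ E₂ a₁ a₂)
    (M₁ M₂ : Matroid (Fin n))
    (hM₁ : ∀ B, M₁.IsBase B ↔ M.IsBase B ∧ (B ∩ E₁).ncard ≤ a₁)
    (hM₂ : ∀ B, M₂.IsBase B ↔ M.IsBase B ∧ (B ∩ E₂).ncard ≤ a₂) :
    basePolytope M = basePolytope M₁ ∪ basePolytope M₂ ∧
    basePolytope M₁ ⊂ basePolytope M ∧
    basePolytope M₂ ⊂ basePolytope M ∧
    IsExtreme ℝ (basePolytope M₁) (basePolytope M₁ ∩ basePolytope M₂) ∧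
    IsExtreme ℝ (basePolytope M₂) (basePolytope M₁ ∩ basePolytope M₂) ∧
    ∃ N : Matroid (Fin n), basePolytope M₁ ∩ basePolytope M₂ = basePolytope N := by
  subst hrank
  have ⟨_, _, _, _, _, ha₁, _, ha₂, _, _⟩ := hgood
  obtain ⟨B₀, hB₀, hB₀₁, hB₀₂⟩ := hgood.exists_isBase_ncard_inter_eq
  have hP₁ := basePolytope_eq_inter_of_isBase_iff hM₁ ⟨B₀, hB₀, hB₀₁⟩
  have hP₂ := basePolytope_eq_inter_of_isBase_iff hM₂ ⟨B₀, hB₀, hB₀₂⟩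
  have hPN := basePolytope_eq_inter_of_isBase_iff
    (fun _ ↦ hgood.isBase_middle_iff_of_isBase_iff hM₁) ⟨B₀, (hM₁ B₀).2 ⟨hB₀, hB₀₁.le⟩, hB₀₂⟩
  have hface₁ := inter_setOf_le_inter_eq_sep fun _ ↦ hgood.coordSum_add_coordSum
  have hface₂ := inter_setOf_le_inter_eq_sep fun x hx ↦
    (add_comm _ _).trans <| (hgood.coordSum_add_coordSum hx).trans (add_comm _ _)
  rw [← hP₁, ← hP₂] at hface₁ hface₂
  rw [inter_comm] at hface₂
  refine ⟨?_, hP₁ ▸ basePolytope_inter_setOf_coordSum_le_ssubset ha₁,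
    hP₂ ▸ basePolytope_inter_setOf_coordSum_le_ssubset ha₂,
    hface₁ ▸ (isExposed_sep_eq_of_forall_le fun x hx ↦ (hP₁ ▸ hx).2).isExtreme,
    hface₂ ▸ (isExposed_sep_eq_of_forall_le fun x hx ↦ (hP₂ ▸ hx).2).isExtreme,
    hgood.middle, ?_⟩
  · rw [hP₁, hP₂, ← inter_union_distrib_left, eq_comm, inter_eq_left]
    intro x hx
    by_contra! hx'
    simp only [mem_union, mem_ofPred_eq, not_or, not_le] at hx'
    linarith [hgood.coordSum_add_coordSum hx]
  · rw [hPN, hP₂, ← inter_assoc, inter_eq_left.2 (hP₁ ▸ inter_subset_left : basePolytope M₁ ⊆ _)]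

/-- a good 2-partition of `M` yields a hyperplane split
`P(M) = P(M₁) ∪ P(M₂)`. -/
theorem statement1 {n : ℕ} (M : Matroid (Fin n)) (hME : M.E = Set.univ) (r : ℕ)
    (hrank : mrk M = r) (E₁ E₂ : Set (Fin n)) (a₁ a₂ : ℕ)
    (hgood : IsGoodPartition2 M r E₁ E₂ a₁ a₂)
    (M₁ M₂ : Matroid (Fin n)) (hM₁E : M₁.E = M.E) (hM₂E : M₂.E = M.E)
    (hM₁ : ∀ B, M₁.IsBase B ↔ M.IsBase B ∧ (B ∩ E₁).ncard ≤ a₁)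
    (hM₂ : ∀ B, M₂.IsBase B ↔ M.IsBase B ∧ (B ∩ E₂).ncard ≤ a₂) :
    basePolytope M = basePolytope M₁ ∪ basePolytope M₂ ∧
    basePolytope M₁ ⊂ basePolytope M ∧
    basePolytope M₂ ⊂ basePolytope M ∧
    IsExtreme ℝ (basePolytope M₁) (basePolytope M₁ ∩ basePolytope M₂) ∧
    IsExtreme ℝ (basePolytope M₂) (basePolytope M₁ ∩ basePolytope M₂) ∧
    ∃ N : Matroid (Fin n), basePolytope M₁ ∩ basePolytope M₂ = basePolytope N :=
  statement1_general M r hrank E₁ E₂ a₁ a₂ hgood M₁ M₂ hM₁ hM₂
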